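/- Let W : ℝ → ℝ be bounded with W' Lipschitz and bounded, α > 0, and define b_W(x,ρ) := ∫ W'(T_ρ(x) - T_ρ(x')) dρ(x') where T_ρ(x) = x + α·ρ((-∞,x)). Then there is a constant C (depending only on α, Lip(W'), ‖W'‖_∞) such that |b_W(x,ρ) - b_W(x,η)| ≤ C·d_TV(ρ,η) for all x ∈ ℝ and all probability measures ρ, η on ℝ. -/

import Mathlib

open MeasureTheory Set

/-- The map `T_ρ(x) = x + α ρ((-∞,x))`. -/
noncomputable def Tmap (α : ℝ) (ρ : Measure ℝ) (x : ℝ) : ℝ :=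
  x + α * (ρ (Iio x)).toReal

/-- Total variation distance between measures on ℝ:
`d_TV(ρ,η) = sup_B |ρ(B) - η(B)|`. -/
noncomputable def dTV (ρ η : Measure ℝ) : ℝ :=
  sSup {r : ℝ | ∃ B : Set ℝ, MeasurableSet B ∧ r = |(ρ B).toReal - (η B).toReal|}

/-- The interaction drift `b_W(x,ρ) = ∫ W'(T_ρ(x) - T_ρ(x')) dρ(x')`,
where `w` stands for `W'`. -/
noncomputable def bW (α : ℝ) (w : ℝ → ℝ) (x : ℝ) (ρ : Measure ℝ) : ℝ :=
  ∫ x', w (Tmap α ρ x - Tmap α ρ x') ∂ρ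

/-!
Both drifts are compared through the intermediate quantity `∫ W'(T_η x - T_η x') dρ(x')`.
Replacing `T_ρ` by `T_η` inside the integral against `ρ` costs at most `2 K |α| d_TV(ρ,η)`,
since `|T_ρ - T_η| ≤ |α| d_TV(ρ,η)` pointwise and `W'` is `K`-Lipschitz. Replacing `ρ` by `η`
as the integrating measure costs at most `2 M d_TV(ρ,η)`: on each piece of a Hahn decomposition
of `(ρ, η)` one measure dominates the other, and the excess mass there is bounded by `d_TV`.
-/

section IntegralSub

variable {Ω : Type*} [MeasurableSpace Ω] {μ ν : Measure Ω} {f : Ω → ℝ} {M : ℝ}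

lemma abs_integral_sub_le_of_le [IsFiniteMeasure μ] (hνμ : ν ≤ μ) (hf : Measurable f)
    (hfM : ∀ y, |f y| ≤ M) :
    |∫ y, f y ∂μ - ∫ y, f y ∂ν| ≤ M * (μ.real univ - ν.real univ) := by
  have : IsFiniteMeasure ν := isFiniteMeasure_of_le μ hνμ
  have : IsFiniteMeasure (μ - ν) := isFiniteMeasure_of_le μ Measure.sub_le
  have hbound : ∀ ξ : Measure Ω, ∀ᵐ y ∂ξ, ‖f y‖ ≤ M := fun _ => ae_of_all _ hfM
  have hdecomp := Measure.sub_add_cancel_of_le hνμ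
  have hint : ∀ ξ : Measure Ω, [IsFiniteMeasure ξ] → Integrable f ξ :=
    fun ξ _ => Integrable.of_bound hf.aestronglyMeasurable M (hbound ξ)
  have hmass : μ.real univ = (μ - ν).real univ + ν.real univ := by
    conv_lhs => rw [← hdecomp]
    exact measureReal_add_apply
  have hsplit : ∫ y, f y ∂μ = ∫ y, f y ∂(μ - ν) + ∫ y, f y ∂ν := by
    conv_lhs => rw [← hdecomp]
    exact integral_add_measure (hint _) (hint _)
  rw [hsplit, add_sub_cancel_right, hmass, add_sub_cancel_right]
  exact norm_integral_le_of_norm_le_const (hbound _)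

lemma restrict_le_restrict_of_forall_subset {T : Set Ω} (hT : MeasurableSet T)
    (h : ∀ t, MeasurableSet t → t ⊆ T → ν t ≤ μ t) : ν.restrict T ≤ μ.restrict T :=
  Measure.le_iff.2 fun A hA => by
    simpa only [Measure.restrict_apply hA] using h _ (hA.inter hT) inter_subset_right

lemma abs_integral_sub_le_of_hahn [IsFiniteMeasure μ] [IsFiniteMeasure ν]
    {S : Set Ω} (hS : MeasurableSet S) (hνμ : ∀ t, MeasurableSet t → t ⊆ S → ν t ≤ μ t)
    (hμν : ∀ t, MeasurableSet t → t ⊆ Sᶜ → μ t ≤ ν t) (hf : Measurable f)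
    (hfM : ∀ y, |f y| ≤ M) :
    |∫ y, f y ∂μ - ∫ y, f y ∂ν| ≤
      M * (μ.real S - ν.real S) + M * (ν.real Sᶜ - μ.real Sᶜ) := by
  have hint : ∀ ξ : Measure Ω, [IsFiniteMeasure ξ] → Integrable f ξ :=
    fun ξ _ => Integrable.of_bound hf.aestronglyMeasurable M (ae_of_all _ hfM)
  have hS' := abs_integral_sub_le_of_le (restrict_le_restrict_of_forall_subset hS hνμ) hf hfM
  have hSc := abs_integral_sub_le_of_le
    (restrict_le_restrict_of_forall_subset hS.compl hμν) hf hfM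
  simp only [measureReal_restrict_apply_univ] at hS' hSc
  rw [← integral_add_compl hS (hint μ), ← integral_add_compl hS (hint ν)]
  calc _ = |(∫ y in S, f y ∂μ - ∫ y in S, f y ∂ν) -
        (∫ y in Sᶜ, f y ∂ν - ∫ y in Sᶜ, f y ∂μ)| := by ring_nf
    _ ≤ _ := (abs_sub _ _).trans (add_le_add hS' hSc)

lemma abs_integral_sub_le_of_forall_abs_sub_le [IsProbabilityMeasure μ] {g : Ω → ℝ} {c : ℝ}
    (hf : Integrable f μ) (hg : Integrable g μ) (h : ∀ y, |f y - g y| ≤ c) :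
    |∫ y, f y ∂μ - ∫ y, g y ∂μ| ≤ c := by
  rw [← integral_sub hf hg]
  simpa only [probReal_univ, mul_one, Real.norm_eq_abs] using
    norm_integral_le_of_norm_le_const (ae_of_all μ fun y => (Real.norm_eq_abs _).trans_le (h y))

end IntegralSub

section TotalVariation

variable (ρ η : Measure ℝ) [IsFiniteMeasure ρ] [IsFiniteMeasure η]

lemma bddAbove_dTV_set :
    BddAbove {r : ℝ | ∃ B : Set ℝ, MeasurableSet B ∧ r = |(ρ B).toReal - (η B).toReal|} := by
  refine ⟨ρ.real univ + η.real univ, ?_⟩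
  rintro r ⟨B, -, rfl⟩
  change |ρ.real B - η.real B| ≤ _
  have hρ : ρ.real B ≤ ρ.real univ := measureReal_mono (subset_univ B)
  have hη : η.real B ≤ η.real univ := measureReal_mono (subset_univ B)
  have := measureReal_nonneg (μ := ρ) (s := B)
  have := measureReal_nonneg (μ := η) (s := B)
  exact abs_sub_le_iff.2 ⟨by linarith, by linarith⟩

variable {ρ η}

lemma abs_measureReal_sub_le_dTV {B : Set ℝ} (hB : MeasurableSet B) :
    |ρ.real B - η.real B| ≤ dTV ρ η :=
  le_csSup (bddAbove_dTV_set ρ η) ⟨B, hB, rfl⟩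

lemma abs_integral_sub_le_two_mul_dTV {f : ℝ → ℝ} {M : ℝ} (hf : Measurable f)
    (hfM : ∀ y, |f y| ≤ M) :
    |∫ y, f y ∂ρ - ∫ y, f y ∂η| ≤ 2 * M * dTV ρ η := by
  obtain ⟨S, hS, hηρ, hρη⟩ := hahn_decomposition ρ η
  have hM : 0 ≤ M := (abs_nonneg _).trans (hfM 0)
  have hdS := (le_abs_self _).trans (abs_measureReal_sub_le_dTV (ρ := ρ) (η := η) hS)
  have hdSc := (neg_le_abs _).trans (abs_measureReal_sub_le_dTV (ρ := ρ) (η := η) hS.compl)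
  calc _ ≤ M * (ρ.real S - η.real S) + M * (η.real Sᶜ - ρ.real Sᶜ) :=
        abs_integral_sub_le_of_hahn hS hηρ hρη hf hfM
    _ ≤ M * dTV ρ η + M * dTV ρ η := by gcongr; linarith
    _ = 2 * M * dTV ρ η := by ring

end TotalVariation

lemma measurable_Tmap (α : ℝ) (ρ : Measure ℝ) : Measurable (Tmap α ρ) := by
  have hmono : Monotone fun x => ρ (Iio x) := fun _ _ h => measure_mono (Iio_subset_Iio h)
  exact measurable_id.add (measurable_const.mul hmono.measurable.ennreal_toReal)

lemma abs_Tmap_sub_Tmap_le_dTV (α : ℝ) {ρ η : Measure ℝ} [IsFiniteMeasure ρ]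
    [IsFiniteMeasure η] (y : ℝ) :
    |Tmap α ρ y - Tmap α η y| ≤ |α| * dTV ρ η := by
  have : Tmap α ρ y - Tmap α η y = α * (ρ.real (Iio y) - η.real (Iio y)) := by
    simp only [Tmap, measureReal_def]; ring
  rw [this, abs_mul]
  exact mul_le_mul_of_nonneg_left (abs_measureReal_sub_le_dTV measurableSet_Iio) (abs_nonneg α)

lemma abs_Tmap_sub_sub_le_dTV (α : ℝ) {ρ η : Measure ℝ} [IsFiniteMeasure ρ]
    [IsFiniteMeasure η] (x y : ℝ) :
    |(Tmap α ρ x - Tmap α ρ y) - (Tmap α η x - Tmap α η y)| ≤ 2 * |α| * dTV ρ η := by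
  calc _ = |(Tmap α ρ x - Tmap α η x) - (Tmap α ρ y - Tmap α η y)| := by ring_nf
    _ ≤ |α| * dTV ρ η + |α| * dTV ρ η := (abs_sub _ _).trans
        (add_le_add (abs_Tmap_sub_Tmap_le_dTV α x) (abs_Tmap_sub_Tmap_le_dTV α y))
    _ = 2 * |α| * dTV ρ η := by ring

theorem bW_TV_Lipschitz_general (α K M : ℝ) (hK : 0 ≤ K)
    (w : ℝ → ℝ) (hwb : ∀ x, |w x| ≤ M) (hwL : ∀ x y, |w x - w y| ≤ K * |x - y|) :
    ∃ C : ℝ, ∀ (x : ℝ) (ρ η : Measure ℝ),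
      IsProbabilityMeasure ρ → IsProbabilityMeasure η →
      |bW α w x ρ - bW α w x η| ≤ C * dTV ρ η := by
  have hw : LipschitzWith K.toNNReal w := .of_dist_le_mul fun a b => by
    simpa only [Real.dist_eq, Real.coe_toNNReal K hK] using hwL a b
  refine ⟨2 * K * |α| + 2 * M, fun x ρ η _ _ => ?_⟩
  have hmeas (ξ : Measure ℝ) : Measurable fun y => w (Tmap α ξ x - Tmap α ξ y) :=
    hw.continuous.measurable.comp (measurable_const.sub (measurable_Tmap α ξ))
  have hint (ξ : Measure ℝ) : Integrable (fun y => w (Tmap α ξ x - Tmap α ξ y)) ρ :=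
    .of_bound (hmeas ξ).aestronglyMeasurable M (ae_of_all _ fun _ => hwb _)
  have hshift :
      |bW α w x ρ - ∫ y, w (Tmap α η x - Tmap α η y) ∂ρ| ≤ K * (2 * |α| * dTV ρ η) :=
    abs_integral_sub_le_of_forall_abs_sub_le (hint ρ) (hint η) fun y =>
      (hwL _ _).trans (mul_le_mul_of_nonneg_left (abs_Tmap_sub_sub_le_dTV α x y) hK)
  have hchange : |∫ y, w (Tmap α η x - Tmap α η y) ∂ρ - bW α w x η| ≤ 2 * M * dTV ρ η :=
    abs_integral_sub_le_two_mul_dTV (hmeas η) fun _ => hwb _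
  calc _ ≤ _ := abs_sub_le _ _ _
    _ ≤ _ := add_le_add hshift hchange
    _ = _ := by ring

/-- If `w = W'` is bounded by `M` and Lipschitz with constant `K`,
then there is a constant `C` (depending only on α, K, M) such that
`|b_W(x,ρ) - b_W(x,η)| ≤ C d_TV(ρ,η)` for all x and all probability measures ρ, η. -/
theorem bW_TV_Lipschitz (α K M : ℝ) (hα : 0 < α) (hK : 0 ≤ K) (hM : 0 ≤ M)
    (w : ℝ → ℝ) (hwb : ∀ x, |w x| ≤ M) (hwL : ∀ x y, |w x - w y| ≤ K * |x - y|) :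
    ∃ C : ℝ, ∀ (x : ℝ) (ρ η : Measure ℝ),
      IsProbabilityMeasure ρ → IsProbabilityMeasure η →
      |bW α w x ρ - bW α w x η| ≤ C * dTV ρ η :=
  bW_TV_Lipschitz_general α K M hK w hwb hwL
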